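/- Let K(ζ₁,ζ₂) be a kernel on (ℝ×ℝ^d)² satisfying |K(ζ₁,ζ₂)| ≤ C⟨t₁−t₂⟩^{-1} where ζ_i = (t_i,x_i), and let W ∈ L²_{loc} with h(t) := ‖W(t,·)‖²_{L²_x}. Define iterated kernels 𝒦₁(ζ₁,ζ₂) = W(ζ₁)W̄(ζ₂)K(ζ₁,ζ₂) and 𝒦_{2n}(ζ₁,ζ_{2n+1}) = ∫ 𝒦_n(ζ₁,ζ_{n+1})𝒦_n(ζ_{n+1},ζ_{2n+1}) dζ_{n+1} for n a power of 2. Then for all m ≥ 1, |𝒦_{2^m}(ζ₁,ζ_{2^m+1})| ≤ C^{2^m} |W(ζ₁)| |W(ζ_{2^m+1})| ∫_{ℝ^{2^m−1}} Π_{j=2}^{2^m} h(t_j) Π_{k=1}^{2^m} ⟨t_k − t_{k+1}⟩^{-1} Π_{ℓ=2}^{2^m} dt_ℓ. -/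

import Mathlib

open MeasureTheory ENNReal

/-- The chain of time variables `t_1 = a, t_2, …, t_N, t_{N+1} = b` built from the
`N-1` intermediate variables `s`. -/
def chainPts (N : ℕ) (a b : ℝ) (s : Fin (N - 1) → ℝ) (k : Fin (N + 1)) : ℝ :=
  if h0 : (k : ℕ) = 0 then a
  else if hN : (k : ℕ) = N then b
  else s ⟨(k : ℕ) - 1, by have := k.isLt; omega⟩

/-!
`W` need not be measurable, so `|W|²` is replaced by a measurable minorant `w` with the same
weighted measure `volume.withDensity w` (`exists_measurable_le_withDensity_eq`); set
`G t = ∫ w(t, x) dx ≤ h t`. By induction on `m`,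
`|𝒦_{2^m}(ζ₁, ζ₂)| ≤ C^{2^m} |W ζ₁| |W ζ₂| D_m(t₁, t₂)` for `D_m = dyadicKernel G m`, i.e.
`D_0(a, b) = ⟨a - b⟩⁻¹` and `D_{m+1}(a, b) = ∫ G t D_m(a, t) D_m(t, b) dt`: in the composition
integral the two kernel bounds depend on the space variable only through `|W η|²`, whose
`x`-integral against a finite measurable weight of `t` is at most the same integral of `G`.
Tonelli then unfolds `D_m` into the chain integral `chainKernel G (2^m - 1)` over the intermediate
times. The weight must be finite for the comparison with `w`; if `D_m(a, t) D_m(t, b) = ∞` for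
some `t`, Peetre's inequality `⟨s + t⟩⁻¹ ≤ ⟨s⟩ ⟨t⟩⁻¹` makes `D_{m+1}` infinite everywhere and the
bound is trivial.
-/

noncomputable def japaneseInv (t : ℝ) : ℝ≥0∞ := ENNReal.ofReal ((1 + |t|)⁻¹)

@[fun_prop]
theorem measurable_japaneseInv : Measurable japaneseInv := by
  unfold japaneseInv; fun_prop

theorem japaneseInv_ne_top (t : ℝ) : japaneseInv t ≠ ∞ := ENNReal.ofReal_ne_top

theorem japaneseInv_add_le (s t : ℝ) :
    japaneseInv (s + t) ≤ ENNReal.ofReal (1 + |s|) * japaneseInv t := by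
  rw [japaneseInv, japaneseInv, ← ENNReal.ofReal_mul (by positivity)]
  refine ENNReal.ofReal_le_ofReal ?_
  rw [← div_eq_mul_inv, le_div_iff₀ (by positivity), inv_mul_eq_div, div_le_iff₀ (by positivity)]
  have : |t| ≤ |s + t| + |s| := by simpa using abs_sub (s + t) s
  nlinarith [mul_nonneg (abs_nonneg s) (abs_nonneg (s + t))]

theorem chainPts_zero (N : ℕ) (a b : ℝ) (s : Fin (N - 1) → ℝ) : chainPts N a b s 0 = a :=
  dif_pos rfl

theorem chainPts_cons (n : ℕ) (a b t : ℝ) (s : Fin n → ℝ) :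
    chainPts (n + 2) a b (Fin.cons t s) = Fin.cons a (chainPts (n + 1) t b s) := by
  ext k
  refine Fin.cases (chainPts_zero _ _ _ _) (fun j => ?_) k
  rw [Fin.cons_succ]
  obtain ⟨j, hj⟩ := j
  rcases j with _ | l
  · simp [chainPts]
  · simp only [chainPts, Fin.succ_mk]
    split_ifs <;> first | omega | rfl | contradiction

section Chains

variable (G : ℝ → ℝ≥0∞)

noncomputable def dyadicKernel : ℕ → ℝ → ℝ → ℝ≥0∞
  | 0, a, b => japaneseInv (a - b)
  | n + 1, a, b => ∫⁻ t, G t * (dyadicKernel n a t * dyadicKernel n t b)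

noncomputable def chainIntegrand (n : ℕ) (a b : ℝ) (s : Fin n → ℝ) : ℝ≥0∞ :=
  (∏ i, G (s i)) *
    ∏ k : Fin (n + 1),
      japaneseInv (chainPts (n + 1) a b s k.castSucc - chainPts (n + 1) a b s k.succ)

noncomputable def chainKernel (n : ℕ) (a b : ℝ) : ℝ≥0∞ :=
  ∫⁻ s, chainIntegrand G n a b s

theorem dyadicKernel_le_mul (n : ℕ) (a b a' b' : ℝ) :
    dyadicKernel G n a b ≤
      ENNReal.ofReal (1 + |a - a'|) * ENNReal.ofReal (1 + |b' - b|) * dyadicKernel G n a' b' := by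
  induction n generalizing a b a' b' with
  | zero =>
    calc japaneseInv (a - b) = japaneseInv ((a - a') + ((b' - b) + (a' - b'))) := by ring_nf
      _ ≤ _ := by
        grw [japaneseInv_add_le, japaneseInv_add_le, ← mul_assoc]
        exact le_rfl
  | succ n ih =>
    set c := ENNReal.ofReal (1 + |a - a'|) * ENNReal.ofReal (1 + |b' - b|)
    calc dyadicKernel G (n + 1) a b
        ≤ ∫⁻ t, c * (G t * (dyadicKernel G n a' t * dyadicKernel G n t b')) := by
          refine lintegral_mono fun t => ?_
          grw [ih a t a' t, ih t b t b']
          simp only [sub_self, abs_zero, add_zero, ENNReal.ofReal_one, mul_one, one_mul, c]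
          exact le_of_eq (by ring)
      _ = c * dyadicKernel G (n + 1) a' b' :=
          lintegral_const_mul' _ _ (mul_ne_top ofReal_ne_top ofReal_ne_top)

theorem dyadicKernel_eq_top {n : ℕ} {a b : ℝ} (h : dyadicKernel G n a b = ∞) (a' b' : ℝ) :
    dyadicKernel G n a' b' = ∞ := by
  by_contra hne
  exact mul_ne_top (mul_ne_top ofReal_ne_top ofReal_ne_top) hne
    (top_unique (h ▸ dyadicKernel_le_mul G n a b a' b'))

theorem dyadicKernel_succ_eq_top {n : ℕ} {a b t : ℝ}
    (h : dyadicKernel G n a t * dyadicKernel G n t b = ∞) (a' b' : ℝ) :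
    dyadicKernel G (n + 1) a' b' = ∞ := by
  have htop : ∀ x y, dyadicKernel G n x y = ∞ := by
    rcases mul_eq_top.1 h with ⟨-, h⟩ | ⟨h, -⟩ <;> exact dyadicKernel_eq_top G h
  cases n with
  | zero => exact absurd (htop 0 0) (japaneseInv_ne_top _)
  | succ n =>
    refine top_unique ((htop 0 0).symm.trans_le (lintegral_mono fun t => ?_))
    rw [htop, htop]
    gcongr <;> exact le_top

@[fun_prop]
theorem measurable_chainPts (N : ℕ) (k : Fin (N + 1)) :
    Measurable fun q : (ℝ × ℝ) × (Fin (N - 1) → ℝ) => chainPts N q.1.1 q.1.2 q.2 k := by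
  unfold chainPts
  split_ifs <;> fun_prop

variable {G}

@[fun_prop]
theorem measurable_chainIntegrand (hG : Measurable G) (n : ℕ) {α : Type*} [MeasurableSpace α]
    {f g : α → ℝ} {s : α → Fin n → ℝ} (hf : Measurable f) (hg : Measurable g)
    (hs : Measurable s) : Measurable fun x => chainIntegrand G n (f x) (g x) (s x) := by
  have : Measurable fun q : (ℝ × ℝ) × (Fin n → ℝ) => chainIntegrand G n q.1.1 q.1.2 q.2 := by
    refine .mul (Finset.measurable_prod _ fun i _ => by fun_prop)
      (Finset.measurable_prod _ fun k _ => ?_)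
    exact measurable_japaneseInv.comp
      ((measurable_chainPts (n + 1) k.castSucc).fun_sub (measurable_chainPts (n + 1) k.succ))
  exact this.comp ((hf.prodMk hg).prodMk hs)

@[fun_prop]
theorem measurable_chainKernel (hG : Measurable G) (n : ℕ) {α : Type*} [MeasurableSpace α]
    {f g : α → ℝ} (hf : Measurable f) (hg : Measurable g) :
    Measurable fun x => chainKernel G n (f x) (g x) := by
  have : Measurable fun q : ℝ × ℝ => chainKernel G n q.1 q.2 :=
    Measurable.lintegral_prod_right' (α := ℝ × ℝ) (β := Fin n → ℝ) (ν := volume)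
      (f := fun q => chainIntegrand G n q.1.1 q.1.2 q.2) (by fun_prop)
  fun_prop

theorem chainKernel_zero (a b : ℝ) : chainKernel G 0 a b = japaneseInv (a - b) := by
  simp [chainKernel, chainIntegrand, chainPts, volume_pi]

theorem chainKernel_mono {G' : ℝ → ℝ≥0∞} (h : G ≤ G') (n : ℕ) (a b : ℝ) :
    chainKernel G n a b ≤ chainKernel G' n a b :=
  lintegral_mono fun s => by
    unfold chainIntegrand
    gcongr with i
    exact h _

theorem chainIntegrand_cons (n : ℕ) (a b t : ℝ) (s : Fin n → ℝ) :
    chainIntegrand G (n + 1) a b (Fin.cons t s) =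
      G t * japaneseInv (a - t) * chainIntegrand G n t b s := by
  rw [chainIntegrand, chainIntegrand, Fin.prod_univ_succ, Fin.prod_univ_succ, chainPts_cons]
  simp only [Fin.cons_zero, Fin.cons_succ, Fin.castSucc_zero, ← Fin.succ_castSucc,
    Fin.succ_zero_eq_one, Fin.cons_one, chainPts_zero]
  ring

theorem chainKernel_succ (hG : Measurable G) (n : ℕ) (a b : ℝ) :
    chainKernel G (n + 1) a b = ∫⁻ t, G t * japaneseInv (a - t) * chainKernel G n t b := by
  have hmp := (volume_preserving_piFinSuccAbove (fun _ : Fin (n + 1) => ℝ) 0).symm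
  rw [chainKernel, ← hmp.lintegral_comp_emb (MeasurableEquiv.measurableEmbedding _),
    Measure.volume_eq_prod, lintegral_prod _ (by fun_prop)]
  refine lintegral_congr fun t => ?_
  simp only [MeasurableEquiv.piFinSuccAbove_symm_apply, Fin.insertNthEquiv, Equiv.coe_fn_mk,
    Fin.insertNth_zero', chainIntegrand_cons]
  exact lintegral_const_mul _ (by fun_prop)

theorem lintegral_mul_chainKernel (hG : Measurable G) (p q : ℕ) (a b : ℝ) :
    ∫⁻ t, G t * (chainKernel G p a t * chainKernel G q t b) = chainKernel G (p + q + 1) a b := by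
  induction p generalizing a with
  | zero =>
    simp only [zero_add, chainKernel_succ hG, chainKernel_zero, mul_assoc]
  | succ p ih =>
    calc ∫⁻ t, G t * (chainKernel G (p + 1) a t * chainKernel G q t b)
        = ∫⁻ t, ∫⁻ r, G r * japaneseInv (a - r) *
            (G t * (chainKernel G p r t * chainKernel G q t b)) := by
          refine lintegral_congr fun t => ?_
          rw [chainKernel_succ hG, ← lintegral_mul_const _ (by fun_prop),
            ← lintegral_const_mul _ (by fun_prop)]
          exact lintegral_congr fun r => by ring
      _ = ∫⁻ r, ∫⁻ t, G r * japaneseInv (a - r) *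
            (G t * (chainKernel G p r t * chainKernel G q t b)) :=
          lintegral_lintegral_swap (by fun_prop)
      _ = ∫⁻ r, G r * japaneseInv (a - r) * chainKernel G (p + q + 1) r b := by
          refine lintegral_congr fun r => ?_
          rw [lintegral_const_mul _ (by fun_prop), ih]
      _ = chainKernel G (p + 1 + q + 1) a b := by
          rw [show p + 1 + q + 1 = p + q + 1 + 1 by ring, chainKernel_succ hG]

theorem dyadicKernel_eq_chainKernel (hG : Measurable G) (m : ℕ) (a b : ℝ) :
    dyadicKernel G m a b = chainKernel G (2 ^ m - 1) a b := by
  induction m generalizing a b with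
  | zero => exact (chainKernel_zero a b).symm
  | succ m ih =>
    simp only [dyadicKernel, ih, lintegral_mul_chainKernel hG]
    congr 1
    have := Nat.one_le_two_pow (n := m)
    rw [pow_succ]
    omega

end Chains

theorem lintegral_mul_le_lintegral_withDensity {α : Type*} [MeasurableSpace α] {μ : Measure α}
    (f : α → ℝ≥0∞) {g : α → ℝ≥0∞} (hg : Measurable g) (hg_fin : ∀ᵐ x ∂μ, g x < ∞) :
    ∫⁻ x, f x * g x ∂μ ≤ ∫⁻ x, g x ∂μ.withDensity f := by
  obtain ⟨f', hf', hf'f, hf'_eq⟩ := exists_measurable_le_lintegral_eq (μ.withDensity g) f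
  calc ∫⁻ x, f x * g x ∂μ = ∫⁻ x, f' x ∂μ.withDensity g := by
        rw [← hf'_eq, lintegral_withDensity_eq_lintegral_mul_non_measurable μ hg hg_fin]
        simp only [Pi.mul_apply, mul_comm]
    _ = ∫⁻ x, g x ∂μ.withDensity f' := by
        rw [lintegral_withDensity_eq_lintegral_mul _ hg hf',
          lintegral_withDensity_eq_lintegral_mul _ hf' hg]
        simp only [Pi.mul_apply, mul_comm]
    _ ≤ ∫⁻ x, g x ∂μ.withDensity f :=
        lintegral_mono' (withDensity_mono (.of_forall hf'f)) le_rfl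

theorem lintegral_prod_mul_fst_le {α β : Type*} [MeasurableSpace α] [MeasurableSpace β]
    {μ : Measure α} {ν : Measure β} [SFinite μ] [SFinite ν] {w wE : α × β → ℝ≥0∞}
    (hwE : Measurable wE) (hw : (μ.prod ν).withDensity wE = (μ.prod ν).withDensity w)
    {Ψ : α → ℝ≥0∞} (hΨ : Measurable Ψ) (hΨ_fin : ∀ a, Ψ a ≠ ∞) :
    ∫⁻ z, w z * Ψ z.1 ∂μ.prod ν ≤ ∫⁻ a, (∫⁻ b, wE (a, b) ∂ν) * Ψ a ∂μ := by
  calc ∫⁻ z, w z * Ψ z.1 ∂μ.prod ν ≤ ∫⁻ z, Ψ z.1 ∂(μ.prod ν).withDensity wE :=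
        hw ▸ lintegral_mul_le_lintegral_withDensity w (by fun_prop)
          (.of_forall fun z => (hΨ_fin z.1).lt_top)
    _ = ∫⁻ a, ∫⁻ b, wE (a, b) * Ψ a ∂ν ∂μ := by
        rw [lintegral_withDensity_eq_lintegral_mul _ hwE (by fun_prop),
          lintegral_prod _ (by fun_prop)]
        rfl
    _ = ∫⁻ a, (∫⁻ b, wE (a, b) ∂ν) * Ψ a ∂μ :=
        lintegral_congr fun a => lintegral_mul_const _ (by fun_prop)

section IteratedKernel

variable {β : Type*} [MeasurableSpace β] {ν : Measure β} [SFinite ν]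

@[fun_prop]
theorem measurable_dyadicKernel {G : ℝ → ℝ≥0∞} (hG : Measurable G) (n : ℕ) {α : Type*}
    [MeasurableSpace α] {f g : α → ℝ} (hf : Measurable f) (hg : Measurable g) :
    Measurable fun x => dyadicKernel G n (f x) (g x) := by
  simp only [dyadicKernel_eq_chainKernel hG]
  fun_prop

theorem lintegral_mul_dyadicKernel_le {w wE : ℝ × β → ℝ≥0∞} (hwE : Measurable wE)
    (hw : (volume.prod ν).withDensity wE = (volume.prod ν).withDensity w) (n : ℕ) (a b : ℝ) :
    ∫⁻ η, w η * (dyadicKernel (fun t => ∫⁻ x, wE (t, x) ∂ν) n a η.1 *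
        dyadicKernel (fun t => ∫⁻ x, wE (t, x) ∂ν) n η.1 b) ∂volume.prod ν ≤
      dyadicKernel (fun t => ∫⁻ x, wE (t, x) ∂ν) (n + 1) a b := by
  set G : ℝ → ℝ≥0∞ := fun t => ∫⁻ x, wE (t, x) ∂ν
  have hG : Measurable G := hwE.lintegral_prod_right'
  by_cases htop : ∃ t, dyadicKernel G n a t * dyadicKernel G n t b = ∞
  · obtain ⟨t, ht⟩ := htop
    rw [dyadicKernel_succ_eq_top G ht]
    exact le_top
  · exact lintegral_prod_mul_fst_le hwE hw (by fun_prop) (not_exists.mp htop)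

theorem enorm_iteratedKernel_le {C : ℝ} (hC : 0 ≤ C) {K : ℝ × β → ℝ × β → ℂ}
    (hK : ∀ ζ₁ ζ₂, ‖K ζ₁ ζ₂‖ ≤ C * (1 + |ζ₁.1 - ζ₂.1|)⁻¹) {W : ℝ × β → ℂ}
    {Kit : ℕ → ℝ × β → ℝ × β → ℂ}
    (hKit0 : ∀ ζ₁ ζ₂, Kit 0 ζ₁ ζ₂ = W ζ₁ * (starRingEnd ℂ) (W ζ₂) * K ζ₁ ζ₂)
    (hKitS : ∀ n ζ₁ ζ₂, Kit (n + 1) ζ₁ ζ₂ = ∫ η, Kit n ζ₁ η * Kit n η ζ₂ ∂volume.prod ν)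
    {wE : ℝ × β → ℝ≥0∞} (hwE : Measurable wE)
    (hw : (volume.prod ν).withDensity wE = (volume.prod ν).withDensity fun η => ‖W η‖ₑ ^ 2)
    (n : ℕ) (ζ₁ ζ₂ : ℝ × β) :
    ‖Kit n ζ₁ ζ₂‖ₑ ≤ ENNReal.ofReal (C ^ 2 ^ n) * ‖W ζ₁‖ₑ * ‖W ζ₂‖ₑ *
      dyadicKernel (fun t => ∫⁻ x, wE (t, x) ∂ν) n ζ₁.1 ζ₂.1 := by
  set G : ℝ → ℝ≥0∞ := fun t => ∫⁻ x, wE (t, x) ∂ν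
  induction n generalizing ζ₁ ζ₂ with
  | zero =>
    have hK' : ‖K ζ₁ ζ₂‖ₑ ≤ ENNReal.ofReal C * japaneseInv (ζ₁.1 - ζ₂.1) := by
      rw [← ofReal_norm, japaneseInv, ← ENNReal.ofReal_mul hC]
      exact ENNReal.ofReal_le_ofReal (hK ζ₁ ζ₂)
    rw [hKit0, enorm_mul, enorm_mul, RCLike.enorm_conj, pow_zero, pow_one]
    calc ‖W ζ₁‖ₑ * ‖W ζ₂‖ₑ * ‖K ζ₁ ζ₂‖ₑ
        ≤ ‖W ζ₁‖ₑ * ‖W ζ₂‖ₑ * (ENNReal.ofReal C * japaneseInv (ζ₁.1 - ζ₂.1)) := by gcongr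
      _ = _ := by rw [dyadicKernel]; ring
  | succ n ih =>
    set P := ENNReal.ofReal (C ^ 2 ^ n)
    have hP : P * P = ENNReal.ofReal (C ^ 2 ^ (n + 1)) := by
      rw [← ENNReal.ofReal_mul (by positivity), ← pow_add, pow_succ, mul_two]
    calc ‖Kit (n + 1) ζ₁ ζ₂‖ₑ
        ≤ ∫⁻ η, ‖Kit n ζ₁ η‖ₑ * ‖Kit n η ζ₂‖ₑ ∂volume.prod ν := by
          rw [hKitS]
          exact (enorm_integral_le_lintegral_enorm _).trans_eq (by simp only [enorm_mul])
      _ ≤ ∫⁻ η, (P * ‖W ζ₁‖ₑ * ‖W η‖ₑ * dyadicKernel G n ζ₁.1 η.1) *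
            (P * ‖W η‖ₑ * ‖W ζ₂‖ₑ * dyadicKernel G n η.1 ζ₂.1) ∂volume.prod ν := by
          gcongr with η
          exacts [ih ζ₁ η, ih η ζ₂]
      _ = P * P * ‖W ζ₁‖ₑ * ‖W ζ₂‖ₑ * ∫⁻ η, ‖W η‖ₑ ^ 2 *
            (dyadicKernel G n ζ₁.1 η.1 * dyadicKernel G n η.1 ζ₂.1) ∂volume.prod ν := by
          rw [← lintegral_const_mul' _ _ (by finiteness)]
          exact lintegral_congr fun η => by ring
      _ ≤ ENNReal.ofReal (C ^ 2 ^ (n + 1)) * ‖W ζ₁‖ₑ * ‖W ζ₂‖ₑ *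
            dyadicKernel G (n + 1) ζ₁.1 ζ₂.1 := by
          rw [hP]
          gcongr
          exact lintegral_mul_dyadicKernel_le hwE hw n _ _

end IteratedKernel

theorem stmt_19_general (d : ℕ) (C : ℝ) (hC : 0 ≤ C)
    (K : (ℝ × EuclideanSpace ℝ (Fin d)) → (ℝ × EuclideanSpace ℝ (Fin d)) → ℂ)
    (hK : ∀ ζ₁ ζ₂, ‖K ζ₁ ζ₂‖ ≤ C * (1 + |ζ₁.1 - ζ₂.1|)⁻¹)
    (W : ℝ × EuclideanSpace ℝ (Fin d) → ℂ)
    (Kit : ℕ → (ℝ × EuclideanSpace ℝ (Fin d)) → (ℝ × EuclideanSpace ℝ (Fin d)) → ℂ)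
    (hKit0 : ∀ ζ₁ ζ₂, Kit 0 ζ₁ ζ₂ = W ζ₁ * (starRingEnd ℂ) (W ζ₂) * K ζ₁ ζ₂)
    (hKitS : ∀ n ζ₁ ζ₂, Kit (n + 1) ζ₁ ζ₂ = ∫ η, Kit n ζ₁ η * Kit n η ζ₂) :
    ∀ (m N : ℕ), 1 ≤ m → N = 2 ^ m → ∀ ζ₁ ζ₂,
      (‖Kit m ζ₁ ζ₂‖₊ : ℝ≥0∞) ≤
        ENNReal.ofReal (C ^ N) * (‖W ζ₁‖₊ : ℝ≥0∞) * (‖W ζ₂‖₊ : ℝ≥0∞) *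
          ∫⁻ s : Fin (N - 1) → ℝ,
            (∏ i, ∫⁻ x : EuclideanSpace ℝ (Fin d), (‖W (s i, x)‖₊ : ℝ≥0∞) ^ 2) *
            ∏ k : Fin N, ENNReal.ofReal
              ((1 + |chainPts N ζ₁.1 ζ₂.1 s k.castSucc -
                      chainPts N ζ₁.1 ζ₂.1 s k.succ|)⁻¹) := by
  intro m N _ hN ζ₁ ζ₂
  obtain ⟨wE, hwE, hwE_le, hw⟩ := exists_measurable_le_withDensity_eq
    (volume : Measure (ℝ × EuclideanSpace ℝ (Fin d))) fun η => ‖W η‖ₑ ^ 2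
  have hG : Measurable fun t => ∫⁻ x, wE (t, x) := hwE.lintegral_prod_right'
  obtain ⟨n, rfl⟩ : ∃ n, N = n + 1 := ⟨2 ^ m - 1, by have := Nat.one_le_two_pow (n := m); omega⟩
  calc ‖Kit m ζ₁ ζ₂‖ₑ
      ≤ ENNReal.ofReal (C ^ 2 ^ m) * ‖W ζ₁‖ₑ * ‖W ζ₂‖ₑ *
          dyadicKernel (fun t => ∫⁻ x, wE (t, x)) m ζ₁.1 ζ₂.1 :=
        enorm_iteratedKernel_le hC hK hKit0 hKitS hwE hw m ζ₁ ζ₂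
    _ = ENNReal.ofReal (C ^ (n + 1)) * ‖W ζ₁‖ₑ * ‖W ζ₂‖ₑ *
          chainKernel (fun t => ∫⁻ x, wE (t, x)) n ζ₁.1 ζ₂.1 := by
        rw [dyadicKernel_eq_chainKernel hG, ← hN, Nat.add_sub_cancel]
    _ ≤ _ := mul_le_mul_right
        (chainKernel_mono (fun t => lintegral_mono fun x => hwE_le (t, x)) n _ _) _

/-- Pointwise bound for iterated kernels: if `|K(ζ₁,ζ₂)| ≤ C⟨t₁-t₂⟩^{-1}`,
`𝒦₀(ζ₁,ζ₂) = W(ζ₁)W̄(ζ₂)K(ζ₁,ζ₂)` and `𝒦_{m+1}(ζ₁,ζ₂) = ∫ 𝒦_m(ζ₁,η)𝒦_m(η,ζ₂) dη`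
(so `𝒦_m` is the kernel of the `2^m`-fold product), then for `m ≥ 1`
`|𝒦_m(ζ₁,ζ_{2^m+1})| ≤ C^{2^m} |W(ζ₁)||W(ζ_{2^m+1})|
∫ Π_{j=2}^{2^m} h(t_j) Π_{k=1}^{2^m} ⟨t_k - t_{k+1}⟩^{-1} dt_2 ⋯ dt_{2^m}`,
where `h(t) = ‖W(t,·)‖²_{L²_x}`. -/
theorem stmt_19 (d : ℕ) (hd : 1 ≤ d) (C : ℝ) (hC : 0 ≤ C)
    (K : (ℝ × EuclideanSpace ℝ (Fin d)) → (ℝ × EuclideanSpace ℝ (Fin d)) → ℂ)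
    (hK : ∀ ζ₁ ζ₂, ‖K ζ₁ ζ₂‖ ≤ C * (1 + |ζ₁.1 - ζ₂.1|)⁻¹)
    (W : ℝ × EuclideanSpace ℝ (Fin d) → ℂ)
    (Kit : ℕ → (ℝ × EuclideanSpace ℝ (Fin d)) → (ℝ × EuclideanSpace ℝ (Fin d)) → ℂ)
    (hKit0 : ∀ ζ₁ ζ₂, Kit 0 ζ₁ ζ₂ = W ζ₁ * (starRingEnd ℂ) (W ζ₂) * K ζ₁ ζ₂)
    (hKitS : ∀ n ζ₁ ζ₂, Kit (n + 1) ζ₁ ζ₂ = ∫ η, Kit n ζ₁ η * Kit n η ζ₂) :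
    ∀ (m N : ℕ), 1 ≤ m → N = 2 ^ m → ∀ ζ₁ ζ₂,
      (‖Kit m ζ₁ ζ₂‖₊ : ℝ≥0∞) ≤
        ENNReal.ofReal (C ^ N) * (‖W ζ₁‖₊ : ℝ≥0∞) * (‖W ζ₂‖₊ : ℝ≥0∞) *
          ∫⁻ s : Fin (N - 1) → ℝ,
            (∏ i, ∫⁻ x : EuclideanSpace ℝ (Fin d), (‖W (s i, x)‖₊ : ℝ≥0∞) ^ 2) *
            ∏ k : Fin N, ENNReal.ofReal
              ((1 + |chainPts N ζ₁.1 ζ₂.1 s k.castSucc -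
                      chainPts N ζ₁.1 ζ₂.1 s k.succ|)⁻¹) :=
  stmt_19_general d C hC K hK W Kit hKit0 hKitS
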